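/- Fix an integer n ≥ 0, a radius R > 0, and constants λ, μ ∈ ℝ. Let w(z) = conj(z)^{−(n+1)} on ℂ \ {0}, identified with the planar vector field (Re w, Im w). Then ∇·w = 0 on ℂ \ {0}, and for every z with |z| = R the traction of w on the circle of radius R satisfies σ(w)·n = −(2μ/R)·(n+1)·w(z), where n = z/R is the outward unit normal; that is, the traction vector at each boundary point equals −(2μ/R)(n+1) times the displacement vector at that point. -/

import Mathlib

open Complex

/-- Partial derivative in the `x`-direction of a scalar function on `ℝ² = ℂ`. -/
noncomputable def pdx (f : ℂ → ℝ) (z : ℂ) : ℝ := fderiv ℝ f z 1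

/-- Partial derivative in the `y`-direction of a scalar function on `ℝ² = ℂ`. -/
noncomputable def pdy (f : ℂ → ℝ) (z : ℂ) : ℝ := fderiv ℝ f z Complex.I

/-- The divergence `∇·w = ∂(Re w)/∂x + ∂(Im w)/∂y` of the planar vector field
`(Re w, Im w)` associated to `w : ℂ → ℂ`. -/
noncomputable def div2 (w : ℂ → ℂ) (z : ℂ) : ℝ :=
  pdx (fun y => (w y).re) z + pdy (fun y => (w y).im) z

/-- The Laplacian `Δf = ∂²f/∂x² + ∂²f/∂y²` of a scalar function on `ℝ² = ℂ`. -/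
noncomputable def lap2 (f : ℂ → ℝ) (z : ℂ) : ℝ :=
  pdx (pdx f) z + pdy (pdy f) z

/-- The gradient `(∂f/∂x, ∂f/∂y)` of a scalar function on `ℝ² = ℂ`, as a complex number. -/
noncomputable def grad2 (f : ℂ → ℝ) (z : ℂ) : ℂ :=
  ⟨pdx f z, pdy f z⟩

/-- The componentwise Laplacian of the planar vector field `(Re w, Im w)`. -/
noncomputable def vecLap2 (w : ℂ → ℂ) (z : ℂ) : ℂ :=
  ⟨lap2 (fun y => (w y).re) z, lap2 (fun y => (w y).im) z⟩

/-- The Lamé operator `L w = −(λ+μ)∇(∇·w) − μΔw` acting on the planar vector field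
`(Re w, Im w)`. -/
noncomputable def lame2 (lam mu : ℝ) (w : ℂ → ℂ) (z : ℂ) : ℂ :=
  (-(lam + mu)) • grad2 (div2 w) z + (-mu) • vecLap2 w z

/-- The Jacobian matrix of the planar vector field `(Re w, Im w)`. -/
noncomputable def jac2 (w : ℂ → ℂ) (z : ℂ) : Matrix (Fin 2) (Fin 2) ℝ :=
  Matrix.of ![![pdx (fun y => (w y).re) z, pdy (fun y => (w y).re) z],
              ![pdx (fun y => (w y).im) z, pdy (fun y => (w y).im) z]]

/-- The stress `σ(w) = λ(∇·w)I + μ(∇w + (∇w)ᵀ)` of the planar vector field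
`(Re w, Im w)`, with Lamé modulus `λ` and shear modulus `μ`. -/
noncomputable def stress2 (lam mu : ℝ) (w : ℂ → ℂ) (z : ℂ) :
    Matrix (Fin 2) (Fin 2) ℝ :=
  (lam * div2 w z) • (1 : Matrix (Fin 2) (Fin 2) ℝ) + mu • (jac2 w z + Matrix.transpose (jac2 w z))

/-- The traction `σ(w)·ν` with unit normal `ν` (identified with a vector in `ℝ²`),
itself identified with a complex number. -/
noncomputable def traction2 (lam mu : ℝ) (w : ℂ → ℂ) (z ν : ℂ) : ℂ :=
  ⟨stress2 lam mu w z 0 0 * ν.re + stress2 lam mu w z 0 1 * ν.im,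
   stress2 lam mu w z 1 0 * ν.re + stress2 lam mu w z 1 1 * ν.im⟩

/-!
`w = conj ∘ f` with `f z = z ^ m` holomorphic, so the real derivative of `w` at `z` is
`v ↦ conj (v * f' z)`. Its Jacobian is symmetric and trace-free: the divergence vanishes and the
stress reduces to `2μ ∇w`, whence the traction at `z` in direction `ν` is `2μ conj (ν f' z)`.
For `ν = z / R` one has `ν f' z = (m / R) f z`, so the traction is `2μ m / R · w z`.
-/

open ComplexConjugate

section PlanarDerivatives

variable {w : ℂ → ℂ} {L : ℂ →L[ℝ] ℂ} {z : ℂ}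

lemma HasFDerivAt.re_comp (h : HasFDerivAt w L z) :
    HasFDerivAt (fun y => (w y).re) (reCLM.comp L) z :=
  reCLM.hasFDerivAt.comp z h

lemma HasFDerivAt.im_comp (h : HasFDerivAt w L z) :
    HasFDerivAt (fun y => (w y).im) (imCLM.comp L) z :=
  imCLM.hasFDerivAt.comp z h

lemma HasFDerivAt.pdx_re (h : HasFDerivAt w L z) : pdx (fun y => (w y).re) z = (L 1).re := by
  rw [pdx, h.re_comp.fderiv]; rfl

lemma HasFDerivAt.pdy_re (h : HasFDerivAt w L z) : pdy (fun y => (w y).re) z = (L I).re := by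
  rw [pdy, h.re_comp.fderiv]; rfl

lemma HasFDerivAt.pdx_im (h : HasFDerivAt w L z) : pdx (fun y => (w y).im) z = (L 1).im := by
  rw [pdx, h.im_comp.fderiv]; rfl

lemma HasFDerivAt.pdy_im (h : HasFDerivAt w L z) : pdy (fun y => (w y).im) z = (L I).im := by
  rw [pdy, h.im_comp.fderiv]; rfl

lemma HasFDerivAt.div2_eq (h : HasFDerivAt w L z) : div2 w z = (L 1).re + (L I).im := by
  rw [div2, h.pdx_re, h.pdy_im]

lemma HasFDerivAt.jac2_eq (h : HasFDerivAt w L z) :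
    jac2 w z = Matrix.of ![![(L 1).re, (L I).re], ![(L 1).im, (L I).im]] := by
  rw [jac2, h.pdx_re, h.pdy_re, h.pdx_im, h.pdy_im]

end PlanarDerivatives

/-- The real-linear map `v ↦ conj (v * a)`, the derivative of `conj ∘ f` where `f' = a`. -/
noncomputable def conjMulCLM (a : ℂ) : ℂ →L[ℝ] ℂ :=
  conjCLE.toContinuousLinearMap.comp
    ((ContinuousLinearMap.smulRight (1 : ℂ →L[ℂ] ℂ) a).restrictScalars ℝ)

@[simp]
lemma conjMulCLM_apply (a v : ℂ) : conjMulCLM a v = conj (v * a) := by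
  simp [conjMulCLM]

lemma HasDerivAt.hasFDerivAt_conj {f : ℂ → ℂ} {a z : ℂ} (hf : HasDerivAt f a z) :
    HasFDerivAt (fun y => conj (f y)) (conjMulCLM a) z :=
  conjCLE.toContinuousLinearMap.hasFDerivAt.comp z (hf.hasFDerivAt.restrictScalars ℝ)

section Antiholomorphic

variable {w : ℂ → ℂ} {a z : ℂ}

lemma jac2_of_hasFDerivAt_conjMulCLM (h : HasFDerivAt w (conjMulCLM a) z) :
    jac2 w z = !![a.re, -a.im; -a.im, -a.re] := by
  rw [h.jac2_eq]
  simp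

lemma div2_eq_zero_of_hasFDerivAt_conjMulCLM (h : HasFDerivAt w (conjMulCLM a) z) :
    div2 w z = 0 := by
  simp [h.div2_eq]

lemma traction2_of_hasFDerivAt_conjMulCLM (h : HasFDerivAt w (conjMulCLM a) z)
    (lam mu : ℝ) (ν : ℂ) :
    traction2 lam mu w z ν = (2 * mu : ℝ) * conj (ν * a) := by
  rw [traction2, stress2, jac2_of_hasFDerivAt_conjMulCLM h,
    div2_eq_zero_of_hasFDerivAt_conjMulCLM h]
  apply Complex.ext <;>
  · simp only [Matrix.add_apply, Matrix.smul_apply, Matrix.transpose_apply, Matrix.of_apply,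
      Matrix.one_apply_eq, Matrix.cons_val', Matrix.cons_val_zero,
      Matrix.cons_val_one, Matrix.cons_val_fin_one, smul_eq_mul, mul_re, mul_im, conj_re,
      conj_im, ofReal_re, ofReal_im, map_mul]
    ring

end Antiholomorphic

lemma hasFDerivAt_conj_zpow {w : ℂ → ℂ} {m : ℤ} (hw : ∀ y : ℂ, y ≠ 0 → w y = conj y ^ m)
    {z : ℂ} (hz : z ≠ 0) : HasFDerivAt w (conjMulCLM (m * z ^ (m - 1))) z := by
  refine (hasDerivAt_zpow m z (Or.inl hz)).hasFDerivAt_conj.congr_of_eventuallyEq ?_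
  filter_upwards [isOpen_compl_singleton.mem_nhds hz] with y hy
  rw [hw y hy, map_zpow₀]

theorem DtN_antiholomorphic_mode (n : ℕ) (R : ℝ) (hR : 0 < R) (lam mu : ℝ)
    (w : ℂ → ℂ) (hw : ∀ z : ℂ, z ≠ 0 → w z = ((starRingEnd ℂ) z) ^ (-((n : ℤ) + 1))) :
    (∀ z : ℂ, z ≠ 0 → div2 w z = 0) ∧
    (∀ z : ℂ, ‖z‖ = R →
      traction2 lam mu w z (z / R) = ((-(2 * mu / R) * ((n : ℝ) + 1) : ℝ) : ℂ) * w z) := by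
  refine ⟨fun z hz => div2_eq_zero_of_hasFDerivAt_conjMulCLM (hasFDerivAt_conj_zpow hw hz),
    fun z hzR => ?_⟩
  have hz : z ≠ 0 := by
    rintro rfl
    exact hR.ne (by simpa using hzR)
  set m : ℤ := -((n : ℤ) + 1)
  calc traction2 lam mu w z (z / R)
      = (2 * mu : ℝ) * conj (z / R * (m * z ^ (m - 1))) :=
        traction2_of_hasFDerivAt_conjMulCLM (hasFDerivAt_conj_zpow hw hz) lam mu _
    _ = (2 * mu : ℝ) * conj ((m / R : ℂ) * z ^ m) := by
        rw [zpow_sub_one₀ hz]; field_simp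
    _ = _ := by
        rw [hw z hz, map_mul, map_zpow₀, map_div₀, conj_ofReal, map_intCast]
        push_cast [m]
        field_simp
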